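/- Let P be a Hermitian positive definite matrix and A a matrix such that the field-of-values bound |u* A u| ≥ c · u* P u and ‖A u‖_{P^{-1}} ≤ C ‖u‖_P hold for all u. Then all eigenvalues of P^{-1}A lie in the annulus c ≤ |λ| ≤ C, hence the spectral condition number of the preconditioned operator P^{-1}A is at most C/c. -/

import Mathlib

open Matrix
open scoped ComplexOrder

/-! An eigenpair `(P⁻¹ A) v = λ v` is a generalized eigenpair `A v = λ P v`. Testing the lower
bound with `u = v` gives `c ‖v‖_P² ≤ |v* A v| = |λ| ‖v‖_P²`, and testing the upper bound gives
`‖A v‖_{P⁻¹}² = |λ|² ‖P v‖_{P⁻¹}² = |λ|² ‖v‖_P² ≤ C² ‖v‖_P²`; since `‖v‖_P² > 0`, both bounds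
on `|λ|` follow. -/

namespace Matrix

variable {ι : Type*} [Fintype ι]

theorem mulVec_eq_smul_mulVec_of_nonsing_inv_mul_mulVec_eq_smul {R : Type*} [CommRing R]
    [DecidableEq ι] {P A : Matrix ι ι R} (hP : IsUnit P.det) {lam : R} {v : ι → R}
    (h : (P⁻¹ * A) *ᵥ v = lam • v) : A *ᵥ v = lam • P *ᵥ v := by
  rw [← mul_nonsing_inv_cancel_left P A hP, ← mulVec_mulVec, h, mulVec_smul]

variable {𝕜 : Type*} [RCLike 𝕜]

theorem IsHermitian.star_mulVec_dotProduct_nonsing_inv_mulVec_mulVec [DecidableEq ι]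
    {P : Matrix ι ι 𝕜} (hP : P.IsHermitian) (hdet : IsUnit P.det) (v : ι → 𝕜) :
    star (P *ᵥ v) ⬝ᵥ P⁻¹ *ᵥ (P *ᵥ v) = star v ⬝ᵥ P *ᵥ v := by
  rw [mulVec_mulVec, nonsing_inv_mul P hdet, one_mulVec, star_mulVec, hP.eq,
    ← dotProduct_mulVec]

namespace PosDef

variable {P A : Matrix ι ι 𝕜} {lam : 𝕜} {v : ι → 𝕜}

theorem le_norm_of_mulVec_eq_smul_mulVec (hP : P.PosDef) (hv : v ≠ 0)
    (hAv : A *ᵥ v = lam • P *ᵥ v) {c : ℝ}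
    (hlow : c * RCLike.re (star v ⬝ᵥ P *ᵥ v) ≤ ‖star v ⬝ᵥ A *ᵥ v‖) : c ≤ ‖lam‖ := by
  obtain ⟨p, hp, hpv⟩ := RCLike.pos_iff_exists_ofReal.mp (hP.dotProduct_mulVec_pos hv)
  rw [hAv, dotProduct_smul, smul_eq_mul, ← hpv, norm_mul, RCLike.norm_ofReal, abs_of_pos hp,
    RCLike.ofReal_re] at hlow
  exact le_of_mul_le_mul_right hlow hp

theorem norm_le_of_mulVec_eq_smul_mulVec [DecidableEq ι] (hP : P.PosDef) (hv : v ≠ 0)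
    (hAv : A *ᵥ v = lam • P *ᵥ v) {C : ℝ} (hC : 0 ≤ C)
    (hup : RCLike.re (star (A *ᵥ v) ⬝ᵥ P⁻¹ *ᵥ (A *ᵥ v)) ≤
      C ^ 2 * RCLike.re (star v ⬝ᵥ P *ᵥ v)) : ‖lam‖ ≤ C := by
  have hAv_norm : star (A *ᵥ v) ⬝ᵥ P⁻¹ *ᵥ (A *ᵥ v) = (‖lam‖ ^ 2 : 𝕜) * (star v ⬝ᵥ P *ᵥ v) := by
    rw [hAv, star_smul, mulVec_smul, smul_dotProduct, dotProduct_smul,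
      hP.isHermitian.star_mulVec_dotProduct_nonsing_inv_mulVec_mulVec
        ((isUnit_iff_isUnit_det P).mp hP.isUnit),
      smul_eq_mul, smul_eq_mul, ← mul_assoc, RCLike.star_def, RCLike.conj_mul]
  obtain ⟨p, hp, hpv⟩ := RCLike.pos_iff_exists_ofReal.mp (hP.dotProduct_mulVec_pos hv)
  rw [hAv_norm, ← hpv, RCLike.ofReal_re] at hup
  have hsq : ‖lam‖ ^ 2 ≤ C ^ 2 := by
    refine le_of_mul_le_mul_right ?_ hp
    simpa only [← RCLike.ofReal_pow, ← RCLike.ofReal_mul, RCLike.ofReal_re] using hup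
  exact (pow_le_pow_iff_left₀ (norm_nonneg lam) hC two_ne_zero).mp hsq

end PosDef

end Matrix

theorem spectrum_annulus_of_fov_bounds_general (n : ℕ) (P A : Matrix (Fin n) (Fin n) ℂ)
    (hP : P.PosDef) (c C : ℝ) (hC : 0 < C)
    (hlow : ∀ u : Fin n → ℂ,
      c * (star u ⬝ᵥ P.mulVec u).re ≤ ‖star u ⬝ᵥ A.mulVec u‖)
    (hup : ∀ u : Fin n → ℂ,
      (star (A.mulVec u) ⬝ᵥ P⁻¹.mulVec (A.mulVec u)).re ≤
        C ^ 2 * (star u ⬝ᵥ P.mulVec u).re) :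
    ∀ (lam : ℂ) (v : Fin n → ℂ), v ≠ 0 → (P⁻¹ * A).mulVec v = lam • v →
      c ≤ ‖lam‖ ∧ ‖lam‖ ≤ C := by
  intro lam v hv heig
  have hAv : A *ᵥ v = lam • P *ᵥ v :=
    mulVec_eq_smul_mulVec_of_nonsing_inv_mul_mulVec_eq_smul
      ((isUnit_iff_isUnit_det P).mp hP.isUnit) heig
  exact ⟨hP.le_norm_of_mulVec_eq_smul_mulVec hv hAv (hlow v),
    hP.norm_le_of_mulVec_eq_smul_mulVec hv hAv hC.le (hup v)⟩

/-- Field-of-values bounds with respect to an SPD matrix `P` localize the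
spectrum of `P⁻¹ A` in the annulus `c ≤ |λ| ≤ C`. -/
theorem spectrum_annulus_of_fov_bounds (n : ℕ) (P A : Matrix (Fin n) (Fin n) ℂ)
    (hP : P.PosDef) (c C : ℝ) (hc : 0 < c) (hC : 0 < C)
    (hlow : ∀ u : Fin n → ℂ,
      c * (star u ⬝ᵥ P.mulVec u).re ≤ ‖star u ⬝ᵥ A.mulVec u‖)
    (hup : ∀ u : Fin n → ℂ,
      (star (A.mulVec u) ⬝ᵥ P⁻¹.mulVec (A.mulVec u)).re ≤
        C ^ 2 * (star u ⬝ᵥ P.mulVec u).re) :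
    ∀ (lam : ℂ) (v : Fin n → ℂ), v ≠ 0 → (P⁻¹ * A).mulVec v = lam • v →
      c ≤ ‖lam‖ ∧ ‖lam‖ ≤ C :=
  spectrum_annulus_of_fov_bounds_general n P A hP c C hC hlow hup
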